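/- arXiv:2312.10875 — 3 statements merged into one kernel-verified Lean document; each statement's English description precedes it below -/
import Mathlib

section
/- (Lemma 3) Let (A_n) be a sequence of real-valued random variables such that for every x ∈ ℝ, P(A_n ≤ sqrt(4·log n − log log n + x)) → F(x) as n → ∞, where F is a continuous distribution function on ℝ. Then the random variables U_n := 4·sqrt(log n)·(A_n − 2·sqrt(log n) + (log log n)/(4·sqrt(log n))) converge weakly to the probability measure with distribution function F. -/
/-!
Put `ℓ = log n`. Solving `U_n ≤ x` for `A_n` gives `A_n ≤ 2√ℓ + (x - log ℓ) / (4√ℓ)`, and the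
square of the right-hand side is `4ℓ - log ℓ + x + (x - log ℓ)² / (16ℓ)`. So `P(U_n ≤ x)` is the
hypothesised distribution function evaluated at a point `x + o(1)`; since these distribution
functions are monotone and their limit `F` is continuous, they converge at such moving points too.
-/

open Filter Topology MeasureTheory ProbabilityTheory

theorem tendsto_apply_of_monotone_of_continuousAt {ι : Type*} {l : Filter ι}
    {p : ι → ℝ → ℝ} {F : ℝ → ℝ} {t : ι → ℝ} {x : ℝ} (hp : ∀ i, Monotone (p i))
    (hconv : ∀ y, Tendsto (fun i => p i y) l (𝓝 (F y))) (hF : ContinuousAt F x)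
    (ht : Tendsto t l (𝓝 x)) :
    Tendsto (fun i => p i (t i)) l (𝓝 (F x)) := by
  refine tendsto_order.2 ⟨fun a ha => ?_, fun b hb => ?_⟩
  · obtain ⟨y, hay, hyx⟩ : ∃ y, a < F y ∧ y < x :=
      (((hF.eventually (lt_mem_nhds ha)).filter_mono nhdsWithin_le_nhds).and
        self_mem_nhdsWithin).exists (f := 𝓝[<] x)
    filter_upwards [(hconv y).eventually (lt_mem_nhds hay), ht.eventually (lt_mem_nhds hyx)]
      with i hpy hyt
    exact hpy.trans_le (hp i hyt.le)
  · obtain ⟨y, hyb, hxy⟩ : ∃ y, F y < b ∧ x < y :=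
      (((hF.eventually (gt_mem_nhds hb)).filter_mono nhdsWithin_le_nhds).and
        self_mem_nhdsWithin).exists (f := 𝓝[>] x)
    filter_upwards [(hconv y).eventually (gt_mem_nhds hyb), ht.eventually (gt_mem_nhds hxy)]
      with i hpy hty
    exact (hp i hty.le).trans_lt hpy

theorem monotone_toReal_measure_setOf_le {Ω : Type*} [MeasurableSpace Ω] (μ : Measure Ω)
    [IsFiniteMeasure μ] (X : Ω → ℝ) {g : ℝ → ℝ} (hg : Monotone g) :
    Monotone fun y => (μ {ω | X ω ≤ g y}).toReal :=
  fun _ _ hyz => ENNReal.toReal_mono (measure_ne_top μ _)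
    (measure_mono fun _ hω => le_trans hω (hg hyz))

theorem tendsto_sq_sub_log_div_atTop (x : ℝ) :
    Tendsto (fun t => (x - Real.log t) ^ 2 / (16 * t)) atTop (𝓝 0) := by
  have hinv : Tendsto (fun t : ℝ => x ^ 2 / (16 * t)) atTop (𝓝 0) :=
    tendsto_const_nhds.div_atTop (tendsto_id.const_mul_atTop (by norm_num))
  have hlog := Real.tendsto_pow_log_div_mul_add_atTop 16 0 1 (by norm_num)
  have hlog_sq := Real.tendsto_pow_log_div_mul_add_atTop 16 0 2 (by norm_num)
  simpa using ((hinv.sub (hlog.const_mul (2 * x))).add hlog_sq).congr fun t => by ring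

theorem mul_sub_add_div_le_iff_le_sqrt {ℓ L x a : ℝ} (hℓ : 0 < ℓ) (hx : 0 ≤ 8 * ℓ + x - L) :
    4 * Real.sqrt ℓ * (a - 2 * Real.sqrt ℓ + L / (4 * Real.sqrt ℓ)) ≤ x ↔
      a ≤ Real.sqrt (4 * ℓ - L + (x + (x - L) ^ 2 / (16 * ℓ))) := by
  set s := Real.sqrt ℓ
  have hs : 0 < s := Real.sqrt_pos.2 hℓ
  have hsq : s ^ 2 = ℓ := Real.sq_sqrt hℓ.le
  have hc : 0 ≤ (8 * ℓ + x - L) / (4 * s) := by positivity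
  have hsqrt :
      Real.sqrt (4 * ℓ - L + (x + (x - L) ^ 2 / (16 * ℓ))) = (8 * ℓ + x - L) / (4 * s) := by
    rw [← Real.sqrt_sq hc, ← hsq]
    congr 1
    field_simp
    ring
  have hlhs : 4 * s * (a - 2 * s + L / (4 * s)) = a * (4 * s) - 8 * ℓ + L := by
    rw [← hsq]
    field_simp
    ring
  rw [hsqrt, le_div_iff₀ (by positivity), hlhs]
  constructor <;> intro h <;> linarith

theorem stmt4_general {Ω : Type*} [MeasurableSpace Ω] (P : Measure Ω) [IsProbabilityMeasure P]
    (A : ℕ → Ω → ℝ)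
    (F : ℝ → ℝ) (hFcont : Continuous F)
    (h : ∀ x : ℝ,
      Tendsto
        (fun n : ℕ =>
          (P {ω | A n ω ≤ Real.sqrt (4 * Real.log n - Real.log (Real.log n) + x)}).toReal)
        atTop (nhds (F x))) :
    ∀ x : ℝ,
      Tendsto
        (fun n : ℕ =>
          (P {ω | 4 * Real.sqrt (Real.log n) *
              (A n ω - 2 * Real.sqrt (Real.log n) +
                Real.log (Real.log n) / (4 * Real.sqrt (Real.log n))) ≤ x}).toReal)
        atTop (nhds (F x)) := by
  intro x
  have hlog : Tendsto (fun n : ℕ => Real.log n) atTop atTop :=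
    Real.tendsto_log_atTop.comp tendsto_natCast_atTop_atTop
  have hshift : Tendsto (fun n : ℕ => x + (x - Real.log (Real.log n)) ^ 2 / (16 * Real.log n))
      atTop (𝓝 x) := by
    simpa using tendsto_const_nhds.add ((tendsto_sq_sub_log_div_atTop x).comp hlog)
  have hmono n : Monotone fun y => (P {ω | A n ω ≤
      Real.sqrt (4 * Real.log n - Real.log (Real.log n) + y)}).toReal :=
    monotone_toReal_measure_setOf_le P (A n)
      fun _ _ hyz => Real.sqrt_le_sqrt (by linarith)
  refine (tendsto_apply_of_monotone_of_continuousAt hmono h hFcont.continuousAt hshift).congr' ?_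
  filter_upwards [hlog.eventually_gt_atTop 0, hlog.eventually_ge_atTop (-(1 + x) / 7)]
    with n hpos hlarge
  -- `log ℓ ≤ ℓ - 1` makes `8ℓ + x - log ℓ` nonnegative once `ℓ` is large
  have hL := Real.log_le_sub_one_of_pos hpos
  have hx : 0 ≤ 8 * Real.log n + x - Real.log (Real.log n) := by linarith
  simp_rw [mul_sub_add_div_le_iff_le_sqrt hpos hx]

theorem stmt4 {Ω : Type*} [MeasurableSpace Ω] (P : Measure Ω) [IsProbabilityMeasure P]
    (A : ℕ → Ω → ℝ) (hA : ∀ n, Measurable (A n))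
    (F : ℝ → ℝ) (hFcont : Continuous F) (hFmono : Monotone F)
    (hF0 : Tendsto F atBot (nhds 0)) (hF1 : Tendsto F atTop (nhds 1))
    (h : ∀ x : ℝ,
      Tendsto
        (fun n : ℕ =>
          (P {ω | A n ω ≤ Real.sqrt (4 * Real.log n - Real.log (Real.log n) + x)}).toReal)
        atTop (nhds (F x))) :
    ∀ x : ℝ,
      Tendsto
        (fun n : ℕ =>
          (P {ω | 4 * Real.sqrt (Real.log n) *
              (A n ω - 2 * Real.sqrt (Real.log n) +
                Real.log (Real.log n) / (4 * Real.sqrt (Real.log n))) ≤ x}).toReal)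
        atTop (nhds (F x)) :=
  stmt4_general P A F hFcont h
end

section
/- Let R = (r_{|i−j|})_{p×p} be a symmetric positive definite Toeplitz correlation matrix with r_0 = 1, T = R^{1/2} its symmetric square root, and C = (c_{km}) = (T^{⊙2})², where ⊙ denotes the Hadamard (entrywise) product and A^{⊙2} = A ⊙ A. Let ε_1, ..., ε_n be i.i.d. p-dimensional random vectors whose components are i.i.d. with mean 0, variance 1 and fourth moment κ_4, and set X_i = T ε_i with coordinates x_{i,k}. For 1 ≤ i < j ≤ n set y_{k,(i,j)} = (x_{i,k} − x_{j,k})². Then: Var(y_{k,(i,j)}) = 8 + 2 c_{kk}(κ_4 − 3); for pairwise distinct i, j, l, Cov(y_{k,(i,j)}, y_{k,(i,l)}) = 2 + c_{kk}(κ_4 − 3); for k ≠ m, Cov(y_{k,(i,j)}, y_{m,(i,j)}) = 8 r_{|k−m|}² + 2 c_{km}(κ_4 − 3); and for k ≠ m and pairwise distinct i, j, l, Cov(y_{k,(i,j)}, y_{m,(i,l)}) = 2 r_{|k−m|}² + c_{km}(κ_4 − 3). -/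
/-!
Each `y_{k,(i,j)}` is the square of a linear form in the independent standardized entries
`ε_{s,a}`, namely `x_{i,k} - x_{j,k} = ∑_a T_{ka} (ε_{i,a} - ε_{j,a})`. For standardized
independent `ξ_q` with fourth moment `κ₄`,
`E[ξ_a ξ_b ξ_c ξ_d] = δ_ab δ_cd + δ_ac δ_bd + δ_ad δ_bc + (κ₄ - 3) δ_abcd`, so for linear forms
`L = ∑ α_q ξ_q` and `M = ∑ β_q ξ_q` one gets `Cov(L², M²) = 2 ⟨α, β⟩² + (κ₄ - 3) ∑ α_q² β_q²`.
Here `α = (e_i - e_j) ⊗ T_{k·}` and `β = (e_i - e_l) ⊗ T_{m·}`, so both sums factor, into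
`w (T Tᵀ)_{km} = w r_{|k-m|}` and `w ((T ⊙ T)(T ⊙ T)ᵀ)_{km} = w c_{km}`, where `w = 2` if the
two pairs coincide and `w = 1` if they share only the index `i`.
-/

open Filter MeasureTheory ProbabilityTheory Matrix

/-- Covariance of two real random variables: `Cov(f,g) = E[fg] - E[f]·E[g]`. -/
noncomputable def cov {Ω : Type*} [MeasurableSpace Ω] (μ : Measure Ω) (f g : Ω → ℝ) : ℝ :=
  (∫ ω, f ω * g ω ∂μ) - (∫ ω, f ω ∂μ) * (∫ ω, g ω ∂μ)

open scoped ENNReal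

section Integrability

variable {Ω : Type*} [MeasurableSpace Ω] {μ : Measure Ω} {f g h k : Ω → ℝ}

lemma MeasureTheory.MemLp.mul_of_four (hf : MemLp f 4 μ) (hg : MemLp g 4 μ) :
    MemLp (fun ω => f ω * g ω) 2 μ :=
  have : ENNReal.HolderTriple 4 4 2 := ⟨by
    rw [← two_mul, show (4 : ℝ≥0∞) = 2 * 2 by norm_num, ENNReal.mul_inv (by simp) (by simp),
      ← mul_assoc, ENNReal.mul_inv_cancel (by simp) (by simp), one_mul]⟩
  hg.mul' hf

lemma MeasureTheory.MemLp.integrable_mul_of_four [IsFiniteMeasure μ] (hf : MemLp f 4 μ)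
    (hg : MemLp g 4 μ) : Integrable (fun ω => f ω * g ω) μ :=
  ((hf.mul_of_four hg).mono_exponent one_le_two).integrable le_rfl

lemma MeasureTheory.MemLp.integrable_mul_mul_mul (hf : MemLp f 4 μ) (hg : MemLp g 4 μ)
    (hh : MemLp h 4 μ) (hk : MemLp k 4 μ) :
    Integrable (fun ω => f ω * g ω * h ω * k ω) μ := by
  simpa [Pi.mul_def, mul_assoc] using (hf.mul_of_four hg).integrable_mul (hh.mul_of_four hk)

lemma integral_sq_sum_mul {ι : Type*} [Fintype ι] {ξ : ι → Ω → ℝ} (α : ι → ℝ) {F : Ω → ℝ}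
    (hF : ∀ a b, Integrable (fun ω => ξ a ω * ξ b ω * F ω) μ) :
    ∫ ω, (∑ q, α q * ξ q ω) ^ 2 * F ω ∂μ =
      ∑ a, ∑ b, α a * α b * ∫ ω, ξ a ω * ξ b ω * F ω ∂μ := by
  have expand : ∀ ω, (∑ q, α q * ξ q ω) ^ 2 * F ω =
      ∑ a, ∑ b, α a * α b * (ξ a ω * ξ b ω * F ω) := fun ω => by
    rw [sq, Finset.sum_mul_sum, Finset.sum_mul]
    refine Finset.sum_congr rfl fun a _ => ?_
    rw [Finset.sum_mul]
    exact Finset.sum_congr rfl fun b _ => by ring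
  simp_rw [expand]
  rw [integral_finsetSum _ fun a _ => integrable_finsetSum _ fun b _ => (hF a b).const_mul _]
  refine Finset.sum_congr rfl fun a _ => ?_
  rw [integral_finsetSum _ fun b _ => (hF a b).const_mul _]
  simp_rw [integral_const_mul]

end Integrability

structure IndepStandardized {Ω ι : Type*} [MeasurableSpace Ω] (ξ : ι → Ω → ℝ) (κ4 : ℝ)
    (μ : Measure Ω) : Prop where
  memLp : ∀ q, MemLp (ξ q) 4 μ
  iIndepFun : iIndepFun ξ μ
  integral_eq_zero : ∀ q, ∫ ω, ξ q ω ∂μ = 0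
  integral_sq : ∀ q, ∫ ω, ξ q ω ^ 2 ∂μ = 1
  integral_pow_four : ∀ q, ∫ ω, ξ q ω ^ 4 ∂μ = κ4

namespace IndepStandardized

variable {Ω ι : Type*} [MeasurableSpace Ω] {μ : Measure Ω} {ξ : ι → Ω → ℝ} {κ4 : ℝ}

lemma aestronglyMeasurable (h : IndepStandardized ξ κ4 μ) (q : ι) :
    AEStronglyMeasurable (ξ q) μ :=
  (h.memLp q).aestronglyMeasurable

lemma aemeasurable (h : IndepStandardized ξ κ4 μ) (q : ι) : AEMeasurable (ξ q) μ :=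
  (h.aestronglyMeasurable q).aemeasurable

lemma integral_mul_mul_mul_mul_of_ne (h : IndepStandardized ξ κ4 μ) {a b c d : ι}
    (hb : a ≠ b) (hc : a ≠ c) (hd : a ≠ d) :
    ∫ ω, ξ a ω * (ξ b ω * ξ c ω * ξ d ω) ∂μ = 0 := by
  classical
  have hind : IndepFun (ξ a) (fun ω => ξ b ω * ξ c ω * ξ d ω) μ :=
    (h.iIndepFun.indepFun_finset₀ {a} {b, c, d} (by simp [*]) h.aemeasurable).comp
      (φ := fun x : ({a} : Finset ι) → ℝ => x ⟨a, by simp⟩)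
      (ψ := fun y : ({b, c, d} : Finset ι) → ℝ => y ⟨b, by simp⟩ * y ⟨c, by simp⟩ * y ⟨d, by simp⟩)
      (_mγ := inferInstance) (_mγ' := inferInstance) (measurable_pi_apply _) (by fun_prop)
  have := h.aestronglyMeasurable
  rw [hind.integral_fun_mul_eq_mul_integral (this a) (by fun_prop), h.integral_eq_zero, zero_mul]

lemma integral_mul [DecidableEq ι] (h : IndepStandardized ξ κ4 μ) (a b : ι) :
    ∫ ω, ξ a ω * ξ b ω ∂μ = if a = b then 1 else 0 := by
  split_ifs with hab
  · subst hab
    simpa [sq] using h.integral_sq a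
  · rw [(h.iIndepFun.indepFun hab).integral_fun_mul_eq_mul_integral
      (h.aestronglyMeasurable a) (h.aestronglyMeasurable b), h.integral_eq_zero, zero_mul]

lemma integral_mul_mul_mul_mul_of_disjoint [DecidableEq ι] (h : IndepStandardized ξ κ4 μ)
    {a b c d : ι} (hac : a ≠ c) (had : a ≠ d) (hbc : b ≠ c) (hbd : b ≠ d) :
    ∫ ω, ξ a ω * ξ b ω * (ξ c ω * ξ d ω) ∂μ =
      (if a = b then 1 else 0) * (if c = d then 1 else 0) := by
  have := h.aestronglyMeasurable
  rw [← h.integral_mul, ← h.integral_mul]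
  exact (h.iIndepFun.indepFun_mul_mul₀ h.aemeasurable a b c d hac had hbc hbd
    ).integral_fun_mul_eq_mul_integral (by fun_prop) (by fun_prop)

lemma integral_mul_mul_mul_mul [DecidableEq ι] (h : IndepStandardized ξ κ4 μ) (a b c d : ι) :
    ∫ ω, ξ a ω * ξ b ω * ξ c ω * ξ d ω ∂μ =
      (if a = b then 1 else 0) * (if c = d then 1 else 0)
        + (if a = c then 1 else 0) * (if b = d then 1 else 0)
        + (if a = d then 1 else 0) * (if b = c then 1 else 0)
        + if a = b ∧ b = c ∧ c = d then κ4 - 3 else 0 := by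
  -- An index occurring exactly once kills the expectation; otherwise the indices pair up.
  have singleton {q x y z : ι} (hx : q ≠ x) (hy : q ≠ y) (hz : q ≠ z)
      (hperm : ∀ ω, ξ a ω * ξ b ω * ξ c ω * ξ d ω = ξ q ω * (ξ x ω * ξ y ω * ξ z ω)) :
      ∫ ω, ξ a ω * ξ b ω * ξ c ω * ξ d ω ∂μ = 0 := by
    simp_rw [hperm]
    exact h.integral_mul_mul_mul_mul_of_ne hx hy hz
  have pairs {x y : ι} (hxy : x ≠ y)
      (hperm : ∀ ω, ξ a ω * ξ b ω * ξ c ω * ξ d ω = ξ x ω * ξ x ω * (ξ y ω * ξ y ω)) :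
      ∫ ω, ξ a ω * ξ b ω * ξ c ω * ξ d ω ∂μ = 1 := by
    simp_rw [hperm]
    simpa using h.integral_mul_mul_mul_mul_of_disjoint hxy hxy hxy hxy
  by_cases hab : a = b
  · subst hab
    by_cases hcd : c = d
    · subst hcd
      by_cases hac : a = c
      · subst hac
        simp_rw [show ∀ ω, ξ a ω * ξ a ω * ξ a ω * ξ a ω = ξ a ω ^ 4 from fun ω => by ring,
          h.integral_pow_four]
        simp only [and_self, if_true]
        ring
      · rw [pairs hac fun ω => by ring]
        simp [hac]
    · by_cases hca : c = a
      · subst hca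
        rw [singleton (q := d) (Ne.symm hcd) (Ne.symm hcd) (Ne.symm hcd) fun ω => by ring]
        simp [hcd]
      · rw [singleton (q := c) hca hca hcd fun ω => by ring]
        simp [hcd, Ne.symm hca]
  · by_cases hac : a = c
    · subst hac
      by_cases hbd : b = d
      · subst hbd
        rw [pairs hab fun ω => by ring]
        simp [hab]
      · rw [singleton (q := b) (Ne.symm hab) (Ne.symm hab) hbd fun ω => by ring]
        simp [hab, hbd, Ne.symm hab]
    · by_cases had : a = d
      · subst had
        by_cases hbc : b = c
        · subst hbc
          rw [pairs hab fun ω => by ring]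
          simp [hab]
        · rw [singleton (q := b) (Ne.symm hab) hbc (Ne.symm hab) fun ω => by ring]
          simp [hab, hac, hbc]
      · rw [singleton hab hac had fun ω => by ring]
        simp [hab, hac, had]

variable [Fintype ι]

lemma memLp_sum (h : IndepStandardized ξ κ4 μ) (α : ι → ℝ) :
    MemLp (fun ω => ∑ q, α q * ξ q ω) 4 μ :=
  memLp_finsetSum _ fun q _ => (h.memLp q).const_mul (α q)

lemma integral_sq_sum [IsFiniteMeasure μ] (h : IndepStandardized ξ κ4 μ) (α : ι → ℝ) :
    ∫ ω, (∑ q, α q * ξ q ω) ^ 2 ∂μ = ∑ q, α q ^ 2 := by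
  classical
  have := integral_sq_sum_mul (μ := μ) α (F := fun _ => 1) fun a b => by
    simpa using (h.memLp a).integrable_mul_of_four (h.memLp b)
  simp only [mul_one, h.integral_mul] at this
  rw [this]
  simp [sq]

lemma integral_mul_mul_sq_sum [DecidableEq ι] (h : IndepStandardized ξ κ4 μ) (α : ι → ℝ) (c d : ι) :
    ∫ ω, ξ c ω * ξ d ω * (∑ q, α q * ξ q ω) ^ 2 ∂μ =
      (if c = d then ∑ q, α q ^ 2 + (κ4 - 3) * α c ^ 2 else 0) + 2 * α c * α d := by
  simp_rw [mul_comm (ξ c _ * ξ d _)]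
  rw [integral_sq_sum_mul α fun a b => by
    simpa only [mul_assoc] using
      (h.memLp a).integrable_mul_mul_mul (h.memLp b) (h.memLp c) (h.memLp d)]
  simp_rw [← mul_assoc, h.integral_mul_mul_mul_mul]
  split_ifs with hcd
  · subst hcd
    simp only [mul_add, Finset.sum_add_distrib, mul_ite, mul_one, mul_zero, ite_and,
      Finset.sum_ite_eq, Finset.sum_ite_eq', Finset.mem_univ, if_true, sq]
    ring
  · simp only [mul_add, Finset.sum_add_distrib, mul_ite, mul_one, mul_zero, hcd, and_false,
      if_false, Finset.sum_ite_eq', Finset.mem_univ, if_true, zero_add, add_zero]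
    ring

lemma integral_sq_sum_mul_sq_sum [IsFiniteMeasure μ] (h : IndepStandardized ξ κ4 μ)
    (α β : ι → ℝ) :
    ∫ ω, (∑ q, α q * ξ q ω) ^ 2 * (∑ q, β q * ξ q ω) ^ 2 ∂μ =
      (∑ q, α q ^ 2) * (∑ q, β q ^ 2) + 2 * (∑ q, α q * β q) ^ 2
        + (κ4 - 3) * ∑ q, α q ^ 2 * β q ^ 2 := by
  classical
  rw [integral_sq_sum_mul α fun a b => ?_]
  · simp_rw [h.integral_mul_mul_sq_sum]
    calc _ = ∑ a, (α a ^ 2 * ∑ q, β q ^ 2 + (κ4 - 3) * (α a ^ 2 * β a ^ 2)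
          + 2 * (α a * β a) * ∑ b, α b * β b) := by
          refine Finset.sum_congr rfl fun a _ => ?_
          simp only [mul_add, Finset.sum_add_distrib, mul_ite, mul_zero, Finset.sum_ite_eq,
            Finset.mem_univ, if_true, Finset.mul_sum]
          ring_nf
      _ = _ := by
          simp only [Finset.sum_add_distrib, ← Finset.sum_mul, ← Finset.mul_sum]
          ring
  · simpa only [sq, mul_assoc] using
      (h.memLp a).integrable_mul_mul_mul (h.memLp b) (h.memLp_sum β) (h.memLp_sum β)

lemma cov_sq_sum_sq_sum [IsFiniteMeasure μ] (h : IndepStandardized ξ κ4 μ) (α β : ι → ℝ) :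
    cov μ (fun ω => (∑ q, α q * ξ q ω) ^ 2) (fun ω => (∑ q, β q * ξ q ω) ^ 2) =
      2 * (∑ q, α q * β q) ^ 2 + (κ4 - 3) * ∑ q, α q ^ 2 * β q ^ 2 := by
  rw [cov, h.integral_sq_sum_mul_sq_sum, h.integral_sq_sum, h.integral_sq_sum]
  ring

end IndepStandardized

section Samples

variable {κ ι : Type*} [Fintype κ] [Fintype ι]

lemma Fintype.sum_prod_mul_mul (x x' : κ → ℝ) (y y' : ι → ℝ) :
    ∑ q : κ × ι, x q.1 * y q.2 * (x' q.1 * y' q.2) = (∑ s, x s * x' s) * ∑ a, y a * y' a := by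
  rw [Fintype.sum_prod_type, Finset.sum_mul_sum]
  exact Finset.sum_congr rfl fun s _ => Finset.sum_congr rfl fun a _ => by ring

lemma cov_sq_sum_mulVec {Ω : Type*} [MeasurableSpace Ω] {μ : Measure Ω} [IsFiniteMeasure μ]
    {κ4 : ℝ} {ε : κ → Ω → ι → ℝ}
    (hε : IndepStandardized (fun q : κ × ι => fun ω => ε q.1 ω q.2) κ4 μ)
    (T : Matrix ι ι ℝ) (x x' : κ → ℝ) (k m : ι) :
    cov μ (fun ω => (∑ s, x s * (T *ᵥ ε s ω) k) ^ 2)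
        (fun ω => (∑ s, x' s * (T *ᵥ ε s ω) m) ^ 2) =
      2 * ((∑ s, x s * x' s) * (T * Tᵀ) k m) ^ 2
        + (κ4 - 3) * ((∑ s, x s ^ 2 * x' s ^ 2) * ((T ⊙ T) * (T ⊙ T)ᵀ) k m) := by
  have coeff : ∀ (x : κ → ℝ) k ω,
      ∑ s, x s * (T *ᵥ ε s ω) k = ∑ q : κ × ι, x q.1 * T k q.2 * ε q.1 ω q.2 := by
    intro x k ω
    simp only [mulVec, dotProduct, Finset.mul_sum, Fintype.sum_prod_type, mul_assoc]
  have sq_sum : ∑ q : κ × ι, (x q.1 * T k q.2) ^ 2 * (x' q.1 * T m q.2) ^ 2 =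
      (∑ s, x s ^ 2 * x' s ^ 2) * ∑ a, T k a ^ 2 * T m a ^ 2 := by
    simp only [mul_pow]
    exact Fintype.sum_prod_mul_mul (x · ^ 2) (x' · ^ 2) (T k · ^ 2) (T m · ^ 2)
  simp_rw [coeff]
  rw [hε.cov_sq_sum_sq_sum, Fintype.sum_prod_mul_mul, sq_sum]
  simp only [Matrix.mul_apply, transpose_apply, hadamard_apply, sq]

end Samples

section Contrasts

variable {κ : Type*} [DecidableEq κ]

lemma sq_single_sub_single_apply {i j : κ} (hij : i ≠ j) (s : κ) :
    (Pi.single i 1 - Pi.single j 1 : κ → ℝ) s ^ 2 = (Pi.single i 1 + Pi.single j 1 : κ → ℝ) s := by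
  simp only [Pi.sub_apply, Pi.add_apply, Pi.single_apply]
  split_ifs <;> simp_all

variable [Fintype κ]

lemma sum_single_sub_single_mul (i j : κ) (f : κ → ℝ) :
    ∑ s, (Pi.single i 1 - Pi.single j 1 : κ → ℝ) s * f s = f i - f j := by
  simp [sub_mul, Finset.sum_sub_distrib, Pi.single_apply]

lemma sum_single_sub_single_mul_single_sub_single {i j l : κ} (hij : i ≠ j) (hil : i ≠ l) :
    ∑ s, (Pi.single i 1 - Pi.single j 1 : κ → ℝ) s * (Pi.single i 1 - Pi.single l 1 : κ → ℝ) s =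
      if j = l then 2 else 1 := by
  rw [sum_single_sub_single_mul]
  split_ifs with hjl
  · subst hjl
    norm_num [Pi.single_apply, Ne.symm hij]
  · norm_num [Pi.single_apply, Ne.symm hij, hil, hjl]

lemma sum_sq_single_sub_single_mul_sq_single_sub_single {i j l : κ} (hij : i ≠ j) (hil : i ≠ l) :
    ∑ s, (Pi.single i 1 - Pi.single j 1 : κ → ℝ) s ^ 2
        * (Pi.single i 1 - Pi.single l 1 : κ → ℝ) s ^ 2 =
      if j = l then 2 else 1 := by
  simp_rw [sq_single_sub_single_apply hij, sq_single_sub_single_apply hil]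
  split_ifs with hjl
  · subst hjl
    norm_num [add_mul, Finset.sum_add_distrib, Pi.single_apply, hij, Ne.symm hij]
  · norm_num [add_mul, Finset.sum_add_distrib, Pi.single_apply, Ne.symm hij, hil, hjl]

end Contrasts

theorem stmt9_general {Ω : Type*} [MeasurableSpace Ω] (μ : Measure Ω) [IsProbabilityMeasure μ]
    (n p : ℕ) (r : ℕ → ℝ) (hr0 : r 0 = 1)
    (R T C : Matrix (Fin p) (Fin p) ℝ)
    (hR : ∀ k m : Fin p, R k m = r ((k : ℤ) - (m : ℤ)).natAbs)
    (hTsymm : T.IsSymm) (hT : T * T = R)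
    (hC : C = T.hadamard T * T.hadamard T)
    (κ4 : ℝ) (ε : Fin n → Ω → Fin p → ℝ)
    -- the n·p components ε_{ij} are jointly independent
    (hindep : iIndepFun
      (fun q : Fin n × Fin p => fun ω => ε q.1 ω q.2) μ)
    (hL4 : ∀ i j, MemLp (fun ω => ε i ω j) 4 μ)
    (hmean : ∀ i j, ∫ ω, ε i ω j ∂μ = 0)
    (hvar : ∀ i j, ∫ ω, (ε i ω j) ^ 2 ∂μ = 1)
    (hfourth : ∀ i j, ∫ ω, (ε i ω j) ^ 4 ∂μ = κ4)
    -- X_i = T ε_i, with coordinates x_{i,k}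
    (X : Fin n → Ω → Fin p → ℝ) (hX : ∀ i ω, X i ω = T.mulVec (ε i ω)) :
    (∀ (i j : Fin n) (k : Fin p), i ≠ j →
      cov μ (fun ω => (X i ω k - X j ω k) ^ 2) (fun ω => (X i ω k - X j ω k) ^ 2) =
        8 + 2 * C k k * (κ4 - 3)) ∧
    (∀ (i j l : Fin n) (k : Fin p), i ≠ j → i ≠ l → j ≠ l →
      cov μ (fun ω => (X i ω k - X j ω k) ^ 2) (fun ω => (X i ω k - X l ω k) ^ 2) =
        2 + C k k * (κ4 - 3)) ∧
    (∀ (i j : Fin n) (k m : Fin p), i ≠ j → k ≠ m →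
      cov μ (fun ω => (X i ω k - X j ω k) ^ 2) (fun ω => (X i ω m - X j ω m) ^ 2) =
        8 * r ((k : ℤ) - (m : ℤ)).natAbs ^ 2 + 2 * C k m * (κ4 - 3)) ∧
    (∀ (i j l : Fin n) (k m : Fin p), i ≠ j → i ≠ l → j ≠ l → k ≠ m →
      cov μ (fun ω => (X i ω k - X j ω k) ^ 2) (fun ω => (X i ω m - X l ω m) ^ 2) =
        2 * r ((k : ℤ) - (m : ℤ)).natAbs ^ 2 + C k m * (κ4 - 3)) := by
  have hξ : IndepStandardized (fun q : Fin n × Fin p => fun ω => ε q.1 ω q.2) κ4 μ :=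
    ⟨fun q => hL4 q.1 q.2, hindep, fun q => hmean q.1 q.2, fun q => hvar q.1 q.2,
      fun q => hfourth q.1 q.2⟩
  have contrast : ∀ i j k ω, X i ω k - X j ω k =
      ∑ s, (Pi.single i 1 - Pi.single j 1 : Fin n → ℝ) s * (T *ᵥ ε s ω) k := by
    intro i j k ω
    rw [sum_single_sub_single_mul, hX, hX]
  have key : ∀ (i j l : Fin n) (k m : Fin p), i ≠ j → i ≠ l →
      cov μ (fun ω => (X i ω k - X j ω k) ^ 2) (fun ω => (X i ω m - X l ω m) ^ 2) =
        2 * ((if j = l then 2 else 1) * r ((k : ℤ) - (m : ℤ)).natAbs) ^ 2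
          + (κ4 - 3) * ((if j = l then 2 else 1) * C k m) := by
    intro i j l k m hij hil
    simp_rw [contrast]
    rw [cov_sq_sum_mulVec hξ, sum_single_sub_single_mul_single_sub_single hij hil,
      sum_sq_single_sub_single_mul_sq_single_sub_single hij hil, hTsymm.eq, hT, hR,
      transpose_hadamard, hTsymm.eq, ← hC]
  refine ⟨fun i j k hij => ?_, fun i j l k hij hil hjl => ?_, fun i j k m hij _ => ?_,
    fun i j l k m hij hil hjl _ => ?_⟩
  · rw [key i j j k k hij hij, if_pos rfl, sub_self, Int.natAbs_zero, hr0]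
    ring
  · rw [key i j l k k hij hil, if_neg hjl, sub_self, Int.natAbs_zero, hr0]
    ring
  · rw [key i j j k m hij hij, if_pos rfl]
    ring
  · rw [key i j l k m hij hil, if_neg hjl]
    ring

theorem stmt9 {Ω : Type*} [MeasurableSpace Ω] (μ : Measure Ω) [IsProbabilityMeasure μ]
    (n p : ℕ) (r : ℕ → ℝ) (hr0 : r 0 = 1)
    (R T C : Matrix (Fin p) (Fin p) ℝ)
    (hR : ∀ k m : Fin p, R k m = r ((k : ℤ) - (m : ℤ)).natAbs)
    (hRpd : R.PosDef) (hTsymm : T.IsSymm) (hTpsd : T.PosSemidef) (hT : T * T = R)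
    (hC : C = T.hadamard T * T.hadamard T)
    (κ4 : ℝ) (ε : Fin n → Ω → Fin p → ℝ)
    (hmeas : ∀ i, Measurable (ε i))
    -- the n·p components ε_{ij} are jointly independent
    (hindep : iIndepFun
      (fun q : Fin n × Fin p => fun ω => ε q.1 ω q.2) μ)
    -- and identically distributed
    (hident : ∀ (i i' : Fin n) (j j' : Fin p),
      IdentDistrib (fun ω => ε i ω j) (fun ω => ε i' ω j') μ μ)
    (hL4 : ∀ i j, MemLp (fun ω => ε i ω j) 4 μ)
    (hmean : ∀ i j, ∫ ω, ε i ω j ∂μ = 0)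
    (hvar : ∀ i j, ∫ ω, (ε i ω j) ^ 2 ∂μ = 1)
    (hfourth : ∀ i j, ∫ ω, (ε i ω j) ^ 4 ∂μ = κ4)
    -- X_i = T ε_i, with coordinates x_{i,k}
    (X : Fin n → Ω → Fin p → ℝ) (hX : ∀ i ω, X i ω = T.mulVec (ε i ω)) :
    (∀ (i j : Fin n) (k : Fin p), i ≠ j →
      cov μ (fun ω => (X i ω k - X j ω k) ^ 2) (fun ω => (X i ω k - X j ω k) ^ 2) =
        8 + 2 * C k k * (κ4 - 3)) ∧
    (∀ (i j l : Fin n) (k : Fin p), i ≠ j → i ≠ l → j ≠ l →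
      cov μ (fun ω => (X i ω k - X j ω k) ^ 2) (fun ω => (X i ω k - X l ω k) ^ 2) =
        2 + C k k * (κ4 - 3)) ∧
    (∀ (i j : Fin n) (k m : Fin p), i ≠ j → k ≠ m →
      cov μ (fun ω => (X i ω k - X j ω k) ^ 2) (fun ω => (X i ω m - X j ω m) ^ 2) =
        8 * r ((k : ℤ) - (m : ℤ)).natAbs ^ 2 + 2 * C k m * (κ4 - 3)) ∧
    (∀ (i j l : Fin n) (k m : Fin p), i ≠ j → i ≠ l → j ≠ l → k ≠ m →
      cov μ (fun ω => (X i ω k - X j ω k) ^ 2) (fun ω => (X i ω m - X l ω m) ^ 2) =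
        2 * r ((k : ℤ) - (m : ℤ)).natAbs ^ 2 + C k m * (κ4 - 3)) :=
  stmt9_general μ n p r hr0 R T C hR hTsymm hT hC κ4 ε hindep hL4 hmean hvar hfourth X hX
end

section
/- (Power consistency of the M_n test) Fix a significance level α ∈ (0,1) and set q_α = −log(32π) − 2·log log((1−α)^{−1}). For each n let p = p_n and let (r_k)_{k≥1} be nonnegative reals with a_p := 8 + (16/p)·Σ_{k=1}^{p−1} r_k²(p−k), and define β_n = 1 − F_ξ( √(8/a_p)·q_α + (√(8/a_p) − 1)·(8 log n − log log n) ), where F_ξ(x) = exp(−(1/(4√(2π)))·e^{−x/2}). If (log n / p)·Σ_{k=1}^{p−1} r_k²(p−k) → ∞ as n → ∞, then β_n → 1. -/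
open Filter

/-- The limiting Gumbel-type distribution function `F_ξ(x) = exp(-(1/(4√(2π))) e^{-x/2})`. -/
noncomputable def Fxi (x : ℝ) : ℝ :=
  Real.exp (-(1 / (4 * Real.sqrt (2 * Real.pi))) * Real.exp (-x / 2))

/-- `a_p = 8 + (16/p) Σ_{k=1}^{p-1} r_k² (p - k)`. -/
noncomputable def aP (p : ℕ) (r : ℕ → ℝ) : ℝ :=
  8 + 16 / (p : ℝ) * ∑ k ∈ Finset.Ico 1 p, r k ^ 2 * ((p : ℝ) - (k : ℝ))

lemma key_ineq (u ln qv : ℝ) (hu : 0 ≤ u) (hln : 0 ≤ ln) :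
    Real.sqrt (8 / (8 + u)) * qv + (Real.sqrt (8 / (8 + u)) - 1) * (8 * ln - Real.log ln)
      ≤ |qv| + -(7 * min (u * ln / 32) (ln / 4)) := by
  set a : ℝ := 8 + u with ha_def
  have ha : (0:ℝ) < a := by positivity
  have ha8 : (8:ℝ) ≤ a := by simp [ha_def]; linarith
  set s : ℝ := Real.sqrt (8 / a) with hs_def
  have hs0 : 0 ≤ s := Real.sqrt_nonneg _
  have hs1 : s ≤ 1 := Real.sqrt_le_one.mpr (by rw [div_le_one ha]; exact ha8)
  have h1 : s * qv ≤ |qv| := by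
    calc s * qv ≤ s * |qv| := mul_le_mul_of_nonneg_left (le_abs_self qv) hs0
    _ ≤ 1 * |qv| := mul_le_mul_of_nonneg_right hs1 (abs_nonneg _)
    _ = |qv| := one_mul _
  have hlog : Real.log ln ≤ ln := Real.log_le_self hln
  have hL : 7 * ln ≤ 8 * ln - Real.log ln := by linarith
  have h2a : (0:ℝ) < 2 * a := by linarith
  have ht : u / (2 * a) ≤ 1 - s := by
    have hc0 : (0:ℝ) ≤ (16 + u) / (2 * a) := by positivity
    have hsc : s ≤ (16 + u) / (2 * a) := by
      rw [hs_def]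
      have h8 : 8 / a ≤ ((16 + u) / (2 * a)) ^ 2 := by
        rw [div_pow, div_le_div_iff₀ ha (by positivity)]
        simp only [ha_def]
        nlinarith [sq_nonneg u]
      calc Real.sqrt (8 / a) ≤ Real.sqrt (((16 + u) / (2 * a)) ^ 2) :=
            Real.sqrt_le_sqrt h8
        _ = (16 + u) / (2 * a) := Real.sqrt_sq hc0
    have he : 1 - (16 + u) / (2 * a) = u / (2 * a) := by
      field_simp
      ring
    linarith
  have hmin : min (u * ln / 32) (ln / 4) ≤ (1 - s) * ln := by
    have hm2 : min (u * ln / 32) (ln / 4) ≤ u * ln / (2 * a) := by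
      rcases le_total u 8 with h | h
      · refine le_trans (min_le_left _ _) ?_
        rw [div_le_div_iff₀ (by norm_num) h2a]
        nlinarith [mul_nonneg hu hln]
      · refine le_trans (min_le_right _ _) ?_
        rw [div_le_div_iff₀ (by norm_num) h2a]
        nlinarith [mul_nonneg hln (by linarith : (0:ℝ) ≤ 2 * u - 16)]
    have : u * ln / (2 * a) = u / (2 * a) * ln := by ring
    rw [this] at hm2
    exact le_trans hm2 (mul_le_mul_of_nonneg_right ht hln)
  have h2 : (1 - s) * (7 * ln) ≤ (1 - s) * (8 * ln - Real.log ln) :=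
    mul_le_mul_of_nonneg_left hL (by linarith)
  have h3 : 7 * min (u * ln / 32) (ln / 4) ≤ 7 * ((1 - s) * ln) :=
    mul_le_mul_of_nonneg_left hmin (by norm_num)
  nlinarith [h1, h2, h3]

theorem stmt18 (α : ℝ) (hα0 : 0 < α) (hα1 : α < 1)
    (qα : ℝ) (hq : qα = -Real.log (32 * Real.pi) - 2 * Real.log (Real.log (1 - α)⁻¹))
    (p : ℕ → ℕ) (hp : ∀ n, 0 < p n)
    (r : ℕ → ℝ) (hr : ∀ k, 1 ≤ k → 0 ≤ r k)
    (β : ℕ → ℝ)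
    (hβ : ∀ n, β n = 1 - Fxi (Real.sqrt (8 / aP (p n) r) * qα +
      (Real.sqrt (8 / aP (p n) r) - 1) * (8 * Real.log n - Real.log (Real.log n))))
    (hdiv : Tendsto
      (fun n : ℕ => Real.log n / (p n : ℝ) *
        ∑ k ∈ Finset.Ico 1 (p n), r k ^ 2 * ((p n : ℝ) - (k : ℝ)))
      atTop atTop) :
    Tendsto β atTop (nhds 1) := by
  set S : ℕ → ℝ := fun n => ∑ k ∈ Finset.Ico 1 (p n), r k ^ 2 * ((p n : ℝ) - (k : ℝ))
    with hS_def
  set u : ℕ → ℝ := fun n => 16 / (p n : ℝ) * S n with hu_def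
  have hu0 : ∀ n, 0 ≤ u n := by
    intro n
    have hS0 : 0 ≤ S n := by
      apply Finset.sum_nonneg
      intro k hk
      rw [Finset.mem_Ico] at hk
      have : (k : ℝ) ≤ (p n : ℝ) := by exact_mod_cast le_of_lt hk.2
      have := sq_nonneg (r k)
      nlinarith
    positivity
  have haeq : ∀ n, aP (p n) r = 8 + u n := fun n => rfl
  -- the argument of Fxi
  set x : ℕ → ℝ := fun n => Real.sqrt (8 / aP (p n) r) * qα +
      (Real.sqrt (8 / aP (p n) r) - 1) * (8 * Real.log n - Real.log (Real.log n))
    with hx_def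
  -- u n * log n /32 tends to atTop
  have hA : Tendsto (fun n => u n * Real.log n / 32) atTop atTop := by
    have heq : ∀ n : ℕ, u n * Real.log n / 32
        = (Real.log n / (p n : ℝ) * S n) / 2 := by
      intro n; simp only [hu_def]; ring
    simp only [heq]
    exact hdiv.atTop_div_const (by norm_num)
  have hB : Tendsto (fun n : ℕ => Real.log n / 4) atTop atTop :=
    (Real.tendsto_log_atTop.comp tendsto_natCast_atTop_atTop).atTop_div_const
      (by norm_num)
  have hm : Tendsto (fun n => min (u n * Real.log n / 32) (Real.log n / 4))
      atTop atTop := by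
    rw [tendsto_atTop] at hA hB ⊢
    intro K
    filter_upwards [hA K, hB K] with n h1 h2
    exact le_min h1 h2
  have hg : Tendsto (fun n => |qα| + -(7 * min (u n * Real.log n / 32)
      (Real.log n / 4))) atTop atBot := by
    apply tendsto_atBot_add_const_left
    exact tendsto_neg_atTop_atBot.comp (hm.const_mul_atTop (by norm_num : (0:ℝ) < 7))
  have hx : Tendsto x atTop atBot := by
    apply tendsto_atBot_mono' atTop ?_ hg
    filter_upwards [eventually_ge_atTop 1] with n hn
    have hln : 0 ≤ Real.log n := Real.log_nonneg (by exact_mod_cast hn)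
    have := key_ineq (u n) (Real.log n) qα (hu0 n) hln
    simpa [hx_def, haeq n] using this
  -- Fxi (x n) → 0
  have hc : 0 < 1 / (4 * Real.sqrt (2 * Real.pi)) := by
    have : 0 < Real.sqrt (2 * Real.pi) := Real.sqrt_pos.mpr (by positivity)
    positivity
  have hFxi : Tendsto (fun n => Fxi (x n)) atTop (nhds 0) := by
    apply Real.tendsto_exp_atBot.comp
    have h1 : Tendsto (fun n => -(x n) / 2) atTop atTop :=
      (tendsto_neg_atBot_atTop.comp hx).atTop_div_const (by norm_num)
    have h2 : Tendsto (fun n => Real.exp (-(x n) / 2)) atTop atTop :=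
      Real.tendsto_exp_atTop.comp h1
    have h3 : Tendsto (fun n => -(1 / (4 * Real.sqrt (2 * Real.pi)) *
        Real.exp (-(x n) / 2))) atTop atBot :=
      tendsto_neg_atTop_atBot.comp (h2.const_mul_atTop hc)
    simpa [Fxi, neg_div, neg_mul] using h3
  have : Tendsto β atTop (nhds (1 - 0)) := by
    have hβ' : β = fun n => 1 - Fxi (x n) := by
      funext n; rw [hβ n]
    rw [hβ']
    exact tendsto_const_nhds.sub hFxi
  simpa using this
end
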